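/- Let k be a field, let f, g, h, t ∈ k[x] be polynomials with t nonconstant, suppose f, g, h all have degree at most d, h has degree exactly d (in particular h ≠ 0), and let λ, μ ∈ k be nonzero. If a, b are natural numbers such that λ·x^b·f(t(x)) + μ·x^a·g(t(x)) = x^{a+b}·h(t(x)) as polynomials in k[x], then a = 0 or b = 0. -/
import Mathlib

open Polynomial

theorem stmt_12 (k : Type*) [Field k] (d : ℕ) (f g h t : Polynomial k)
    (ht : 0 < t.natDegree) (hf : f.natDegree ≤ d) (hg : g.natDegree ≤ d)
    (hh : h.natDegree = d) (hh0 : h ≠ 0) (lam mu : k) (hlam : lam ≠ 0) (hmu : mu ≠ 0)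
    (a b : ℕ)
    (heq : Polynomial.C lam * Polynomial.X ^ b * f.comp t +
        Polynomial.C mu * Polynomial.X ^ a * g.comp t =
      Polynomial.X ^ (a + b) * h.comp t) :
    a = 0 ∨ b = 0 := by
  by_contra hab
  push_neg at hab
  obtain ⟨ha, hb⟩ := hab
  have hcomp : h.comp t ≠ 0 := by
    intro h0
    rcases Polynomial.comp_eq_zero_iff.mp h0 with h' | ⟨_, h'⟩
    · exact hh0 h'
    · rw [h'] at ht; simp at ht
  have hX : (X : Polynomial k) ≠ 0 := X_ne_zero
  have hrhs : (X ^ (a + b) * h.comp t).natDegree = a + b + d * t.natDegree := by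
    rw [natDegree_mul (pow_ne_zero _ hX) hcomp, natDegree_pow, natDegree_X,
      natDegree_comp, hh, mul_one]
  have hlhs : (C lam * X ^ b * f.comp t + C mu * X ^ a * g.comp t).natDegree
      ≤ max a b + d * t.natDegree := by
    apply (natDegree_add_le _ _).trans
    apply max_le
    · apply (natDegree_mul_le).trans
      have : (C lam * X ^ b).natDegree ≤ b := by
        apply natDegree_mul_le.trans
        simp
      have h2 : (f.comp t).natDegree ≤ d * t.natDegree :=
        natDegree_comp_le.trans (Nat.mul_le_mul_right _ hf)
      omega
    · apply (natDegree_mul_le).trans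
      have : (C mu * X ^ a).natDegree ≤ a := by
        apply natDegree_mul_le.trans
        simp
      have h2 : (g.comp t).natDegree ≤ d * t.natDegree :=
        natDegree_comp_le.trans (Nat.mul_le_mul_right _ hg)
      omega
  rw [heq, hrhs] at hlhs
  omega
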